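/- arXiv:1108.4856 — 4 statements merged into one kernel-verified Lean document; each statement's English description precedes it below -/
import Mathlib

section
/- Let X₁ be a real-valued random variable with a log-concave density and mean zero. Then 1/e ≤ P(X₁ ≥ 0) ≤ 1 - 1/e. -/
/-!
Log-concavity of the density passes to the tail function `S t = P(X₁ ≥ t)` in the form
"`S (t + Δ) / S t` is nonincreasing in `t`": split `[t, ∞) = [t, t') ∪ [t', ∞)` and integrate
`g (y + Δ) g x ≤ g (x + Δ) g y` over `x < y`. Hence `log S` lies below each of its chords outside
the chord's interval. A chord of negative slope shows that both tails decay exponentially, so `X₁`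
is integrable and `E X₁ = 0` says `∫₀^∞ P(X₁ ≥ t) dt = ∫₀^∞ P(X₁ ≤ -t) dt`. The chord through `-h`
and `0` gives `S t ≤ K e^{c t}` with `K = S (-h)` and `c ≤ 0`, which bounds the left side by
`K / |c|` and the right side from below by `(K - 1 - log K) / |c|`; so `log K ≥ -1`. Letting
`h → 0` gives `P(X₁ ≥ 0) ≥ 1/e`, and applying this to `-X₁`, whose law has no atom at `0`, gives
`P(X₁ ≥ 0) ≤ 1 - 1/e`.
-/

open MeasureTheory Real Set Filter Topology
open scoped ENNReal

namespace Grunbaum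

/-- `S (t + Δ) / S t` is antitone in `t` for every `Δ ≥ 0`, written without division; for positive
`S` it says that the increments of `log S` are nonincreasing. -/
def AntitoneShiftRatio {R : Type*} [Mul R] [LE R] (S : ℝ → R) : Prop :=
  ∀ ⦃t t' Δ : ℝ⦄, t ≤ t' → 0 ≤ Δ → S (t' + Δ) * S t ≤ S (t + Δ) * S t'

theorem AntitoneShiftRatio.comp_neg {R : Type*} [CommMagma R] [LE R] {S : ℝ → R}
    (hS : AntitoneShiftRatio S) : AntitoneShiftRatio fun t => S (-t) := by
  intro t t' Δ htt hΔ
  have h := hS (t := -t' - Δ) (t' := -t - Δ) (by linarith) hΔ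
  simp only [sub_add_cancel] at h
  simp only [neg_add']
  rwa [mul_comm, mul_comm (S (-t - Δ))]

theorem AntitoneShiftRatio.ofReal {g : ℝ → ℝ} (hg0 : ∀ x, 0 ≤ g x) (hg : AntitoneShiftRatio g) :
    AntitoneShiftRatio fun x => ENNReal.ofReal (g x) := by
  intro t t' Δ htt hΔ
  simp only [← ENNReal.ofReal_mul (hg0 _)]
  exact ENNReal.ofReal_le_ofReal (hg htt hΔ)

theorem AntitoneShiftRatio.toReal {F : ℝ → ℝ≥0∞} (hF : AntitoneShiftRatio F)
    (hF_top : ∀ t, F t ≠ ∞) : AntitoneShiftRatio fun t => (F t).toReal := by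
  intro t t' Δ htt hΔ
  simp only [← ENNReal.toReal_mul]
  exact ENNReal.toReal_mono (ENNReal.mul_ne_top (hF_top _) (hF_top _)) (hF htt hΔ)

theorem antitoneShiftRatio_of_logConcave {g : ℝ → ℝ} (hg0 : ∀ x, 0 ≤ g x)
    (hlc : ∀ x y a b : ℝ, 0 ≤ a → 0 ≤ b → a + b = 1 →
      g x ^ a * g y ^ b ≤ g (a * x + b * y)) :
    AntitoneShiftRatio g := by
  intro x y Δ hxy hΔ
  rcases hΔ.eq_or_lt with rfl | hΔpos
  · simp only [add_zero, mul_comm, le_refl]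
  rcases (hg0 x).eq_or_lt with hx | hx
  · rw [← hx, mul_zero]; exact mul_nonneg (hg0 _) (hg0 _)
  rcases (hg0 (y + Δ)).eq_or_lt with hy | hy
  · rw [← hy, zero_mul]; exact mul_nonneg (hg0 _) (hg0 _)
  -- `x + Δ` and `y` are the convex combinations `b x + a (y + Δ)` and `a x + b (y + Δ)`
  have hd : 0 < y + Δ - x := by linarith
  set a := Δ / (y + Δ - x) with ha_def
  set b := (y - x) / (y + Δ - x) with hb_def
  have ha : 0 ≤ a := by positivity
  have hb : 0 ≤ b := div_nonneg (by linarith) hd.le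
  have hab : a + b = 1 := by rw [ha_def, hb_def]; field_simp; ring
  have hxΔ : g x ^ b * g (y + Δ) ^ a ≤ g (x + Δ) := by
    convert hlc x (y + Δ) b a hb ha (by linarith) using 2
    rw [ha_def, hb_def]; field_simp; ring
  have hyy : g x ^ a * g (y + Δ) ^ b ≤ g y := by
    convert hlc x (y + Δ) a b ha hb hab using 2
    rw [ha_def, hb_def]; field_simp; ring
  calc g (y + Δ) * g x
      = (g x ^ b * g (y + Δ) ^ a) * (g x ^ a * g (y + Δ) ^ b) := by
        rw [mul_mul_mul_comm, ← rpow_add hx, ← rpow_add hy, add_comm b, hab, rpow_one,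
          rpow_one, mul_comm]
    _ ≤ g (x + Δ) * g y := by gcongr; exact hg0 _

section Tails

variable {f : ℝ → ℝ≥0∞}

theorem lintegral_Ici_eq_add {u u' : ℝ} (h : u ≤ u') :
    ∫⁻ x in Ici u, f x = (∫⁻ x in Ico u u', f x) + ∫⁻ x in Ici u', f x := by
  rw [← lintegral_union measurableSet_Ici ((Iio_disjoint_Ici le_rfl).mono_left Ico_subset_Iio_self),
    Ico_union_Ici_eq_Ici h]

theorem setLIntegral_comp_add_right (Δ : ℝ) (s : Set ℝ) :
    ∫⁻ x in (· + Δ) ⁻¹' s, f (x + Δ) = ∫⁻ x in s, f x :=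
  (measurePreserving_add_right volume Δ).setLIntegral_comp_preimage_emb
    (MeasurableEquiv.addRight Δ).measurableEmbedding f s

theorem AntitoneShiftRatio.lintegral_cross (hf : AntitoneShiftRatio f) (hf_top : ∀ x, f x ≠ ∞)
    (hfin : ∀ s, ∫⁻ x in Ici s, f x ≠ ∞) {t t' Δ : ℝ} (hΔ : 0 ≤ Δ) :
    (∫⁻ x in Ici (t' + Δ), f x) * ∫⁻ x in Ico t t', f x ≤
      (∫⁻ x in Ico (t + Δ) (t' + Δ), f x) * ∫⁻ x in Ici t', f x := by
  have hshift₁ : ∫⁻ x in Ici (t' + Δ), f x = ∫⁻ y in Ici t', f (y + Δ) := by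
    rw [← setLIntegral_comp_add_right Δ, preimage_add_const_Ici, add_sub_cancel_right]
  have hshift₂ : ∫⁻ x in Ico (t + Δ) (t' + Δ), f x = ∫⁻ x in Ico t t', f (x + Δ) := by
    rw [← setLIntegral_comp_add_right Δ, preimage_add_const_Ico, add_sub_cancel_right,
      add_sub_cancel_right]
  have hB : ∫⁻ x in Ico t t', f x ≠ ∞ :=
    ne_top_of_le_ne_top (hfin t) (lintegral_mono_set Ico_subset_Ici_self)
  have hB' : ∫⁻ x in Ico t t', f (x + Δ) ≠ ∞ :=
    hshift₂ ▸ ne_top_of_le_ne_top (hfin _) (lintegral_mono_set Ico_subset_Ici_self)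
  rw [hshift₁, hshift₂]
  calc (∫⁻ y in Ici t', f (y + Δ)) * ∫⁻ x in Ico t t', f x
      = ∫⁻ y in Ici t', ∫⁻ x in Ico t t', f (y + Δ) * f x := by
        rw [← lintegral_mul_const' _ _ hB]
        exact lintegral_congr fun y => (lintegral_const_mul' _ _ (hf_top _)).symm
    _ ≤ ∫⁻ y in Ici t', ∫⁻ x in Ico t t', f (x + Δ) * f y := by
        refine setLIntegral_mono' measurableSet_Ici fun y hy => ?_
        exact setLIntegral_mono' measurableSet_Ico fun x hx => hf (hx.2.le.trans hy) hΔ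
    _ = (∫⁻ x in Ico t t', f (x + Δ)) * ∫⁻ y in Ici t', f y := by
        rw [← lintegral_const_mul' _ _ hB']
        exact lintegral_congr fun y => lintegral_mul_const' _ _ (hf_top _)

theorem AntitoneShiftRatio.lintegral_Ici (hf : AntitoneShiftRatio f) (hf_top : ∀ x, f x ≠ ∞)
    (hfin : ∀ s, ∫⁻ x in Ici s, f x ≠ ∞) :
    AntitoneShiftRatio fun t => ∫⁻ x in Ici t, f x := by
  intro t t' Δ htt hΔ
  beta_reduce
  rw [lintegral_Ici_eq_add htt, lintegral_Ici_eq_add (by linarith : t + Δ ≤ t' + Δ), mul_add,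
    add_mul]
  gcongr ?_ + _
  exact hf.lintegral_cross hf_top hfin hΔ

end Tails

section RealValued

variable {S : ℝ → ℝ}

theorem AntitoneShiftRatio.le_mul_zpow (hS : AntitoneShiftRatio S) {a h : ℝ} (hh : 0 ≤ h)
    (ha : 0 < S a) (hah : 0 < S (a + h)) (m : ℤ) :
    S (a + m * h) ≤ S a * (S (a + h) / S a) ^ m := by
  have hr : 0 < S (a + h) / S a := div_pos hah ha
  induction m using Int.induction_on with
  | zero => simp
  | succ i ih =>
    have step := hS (t := a) (t' := a + i * h) (le_add_of_nonneg_right (by positivity)) hh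
    push_cast at ih ⊢
    calc S (a + (i + 1) * h) = S (a + i * h + h) := by ring_nf
      _ ≤ S (a + h) / S a * S (a + i * h) := by rw [div_mul_eq_mul_div, le_div_iff₀ ha]; exact step
      _ ≤ S (a + h) / S a * (S a * (S (a + h) / S a) ^ (i : ℤ)) := by gcongr
      _ = S a * (S (a + h) / S a) ^ ((i : ℤ) + 1) := by rw [zpow_add_one₀ hr.ne']; ring
  | pred i ih =>
    have step := hS (t := a + (-i - 1) * h) (t' := a) (by nlinarith) hh
    push_cast at ih ⊢
    calc S (a + (-i - 1) * h) ≤ S (a + (-i - 1) * h + h) * S a / S (a + h) := by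
          rw [le_div_iff₀ hah, mul_comm]; exact step
      _ = S (a + -i * h) * S a / S (a + h) := by ring_nf
      _ ≤ S a * (S (a + h) / S a) ^ (-(i : ℤ)) * S a / S (a + h) := by gcongr
      _ = S a * (S (a + h) / S a) ^ (-(i : ℤ) - 1) := by
          rw [zpow_sub_one₀ hr.ne']; field_simp

-- Rounding `t` down to the grid `a + ℤ (b - a)` costs one step: hence `S a`, not `S b`, in front.
theorem AntitoneShiftRatio.le_mul_exp (hS : AntitoneShiftRatio S) (hanti : Antitone S)
    {a b : ℝ} (hab : a < b) (hb : 0 < S b) (t : ℝ) :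
    S t ≤ S a * exp (log (S b / S a) / (b - a) * (t - b)) := by
  have hh : 0 < b - a := sub_pos.2 hab
  have ha : 0 < S a := hb.trans_le (hanti hab.le)
  have hlog : log (S b / S a) ≤ 0 :=
    log_nonpos (by positivity) ((div_le_one ha).2 (hanti hab.le))
  set m := ⌊(t - a) / (b - a)⌋
  have hm : a + m * (b - a) ≤ t := by
    have := Int.floor_le ((t - a) / (b - a))
    rw [le_div_iff₀ hh] at this
    linarith
  have hm' : (t - b) / (b - a) ≤ m := by
    have := Int.lt_floor_add_one ((t - a) / (b - a))
    rw [div_lt_iff₀ hh] at this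
    rw [div_le_iff₀ hh]
    linarith
  calc S t ≤ S (a + m * (b - a)) := hanti hm
    _ ≤ S a * (S b / S a) ^ m := by
        simpa using hS.le_mul_zpow hh.le ha (by simpa using hb) m
    _ = S a * exp (log (S b / S a) * m) := by
        rw [← rpow_intCast, rpow_def_of_pos (by positivity)]
    _ ≤ S a * exp (log (S b / S a) / (b - a) * (t - b)) := by
        rw [div_mul_eq_mul_div, mul_div_assoc]
        exact mul_le_mul_of_nonneg_left (exp_le_exp.2 (mul_le_mul_of_nonpos_left hm' hlog)) ha.le

theorem AntitoneShiftRatio.exists_le_mul_exp (hS : AntitoneShiftRatio S) (hanti : Antitone S)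
    (hS1 : ∀ t, S t ≤ 1) (hlim : Tendsto S atTop (𝓝 0)) :
    ∃ C c, c < 0 ∧ ∀ t, S t ≤ C * exp (c * t) := by
  by_cases hpos : ∀ t, 0 < S t
  · obtain ⟨b, hb, hb0⟩ := ((hlim.eventually (gt_mem_nhds (hpos 0))).and
      (eventually_gt_atTop 0)).exists
    refine ⟨S 0 * exp (-(log (S b / S 0) / b * b)), log (S b / S 0) / b,
      div_neg_of_neg_of_pos (log_neg (div_pos (hpos b) (hpos 0)) ((div_lt_one (hpos 0)).2 hb))
        hb0, fun t => ?_⟩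
    rw [mul_assoc, ← exp_add]
    simpa [sub_eq_add_neg, add_comm, mul_add] using hS.le_mul_exp hanti hb0 (hpos b) t
  · simp only [not_forall, not_lt] at hpos
    obtain ⟨b, hb⟩ := hpos
    refine ⟨exp b, -1, by norm_num, fun t => ?_⟩
    rw [← exp_add]
    rcases le_total t b with htb | hbt
    · exact (hS1 t).trans (one_le_exp (by linarith))
    · exact (hanti hbt).trans (hb.trans (exp_pos _).le)

end RealValued

theorem integral_one_sub_mul_exp {c : ℝ} (hc : c ≠ 0) (K T : ℝ) :
    ∫ t in 0..T, (1 - K * exp (-(c * t))) = T + K * (exp (-(c * T)) - 1) / c := by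
  rw [intervalIntegral.integral_eq_sub_of_hasDerivAt (f := fun t => t + K * exp (-(c * t)) / c)]
  · simp only [mul_zero, neg_zero, exp_zero, zero_add]
    ring
  · intro t _
    refine ((hasDerivAt_id' t).add
      ((((hasDerivAt_id' t).const_mul c).neg.exp.const_mul K).div_const c)).congr_deriv ?_
    simp only [Pi.neg_apply]
    field_simp
    ring
  · exact (continuous_const.sub (continuous_const.mul
      (continuous_exp.comp (continuous_const.mul continuous_id).neg))).intervalIntegrable _ _

theorem lintegral_Ioi_ofReal_mul_exp {K c : ℝ} (hK : 0 ≤ K) (hc : c < 0) :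
    ∫⁻ t in Ioi 0, ENNReal.ofReal (K * exp (c * t)) = ENNReal.ofReal (-K / c) := by
  rw [← ofReal_integral_eq_lintegral_ofReal ((integrableOn_exp_mul_Ioi hc 0).const_mul K)
    (ae_of_all _ fun t => by positivity), integral_const_mul, integral_exp_mul_Ioi hc]
  simp only [mul_zero, exp_zero]
  ring_nf

theorem map_neg_withDensity (f : ℝ → ℝ≥0∞) :
    (volume.withDensity f).map Neg.neg = volume.withDensity fun x => f (-x) := by
  ext s hs
  rw [Measure.map_apply measurable_neg hs, withDensity_apply _ (measurable_neg hs),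
    withDensity_apply _ hs]
  have := (Measure.measurePreserving_neg (volume : Measure ℝ)).setLIntegral_comp_preimage_emb
    (Homeomorph.neg ℝ).measurableEmbedding f (Neg.neg ⁻¹' s)
  simpa using this.symm

theorem antitoneShiftRatio_measureReal_Ici {g : ℝ → ℝ} (hg0 : ∀ x, 0 ≤ g x)
    (hg : AntitoneShiftRatio g) {μ : Measure ℝ} [IsFiniteMeasure μ]
    (hμ : μ = volume.withDensity fun x => ENNReal.ofReal (g x)) :
    AntitoneShiftRatio fun t => μ.real (Ici t) := by
  have happ : ∀ t, μ (Ici t) = ∫⁻ x in Ici t, ENNReal.ofReal (g x) := fun t => by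
    rw [hμ, withDensity_apply _ measurableSet_Ici]
  have hfin : ∀ t, ∫⁻ x in Ici t, ENNReal.ofReal (g x) ≠ ∞ := fun t => happ t ▸ measure_ne_top μ _
  simpa only [measureReal_def, happ] using
    ((hg.ofReal hg0).lintegral_Ici (fun _ => ENNReal.ofReal_ne_top) hfin).toReal hfin

section Measure

variable {μ : Measure ℝ}

instance isProbabilityMeasure_map_neg [IsProbabilityMeasure μ] :
    IsProbabilityMeasure (μ.map Neg.neg) :=
  Measure.isProbabilityMeasure_map measurable_neg.aemeasurable

theorem tendsto_measure_Ici_atTop (μ : Measure ℝ) [IsFiniteMeasure μ] :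
    Tendsto (fun t => μ (Ici t)) atTop (𝓝 0) := by
  have := tendsto_measure_iInter_atTop (μ := μ) (fun t => measurableSet_Ici.nullMeasurableSet)
    antitone_Ici ⟨0, measure_ne_top μ _⟩
  have hempty : ⋂ t : ℝ, Ici t = ∅ :=
    eq_empty_of_forall_notMem fun x hx => absurd (mem_iInter.1 hx (x + 1)) (by simp)
  rwa [hempty, measure_empty] at this

theorem tendsto_measure_Ici_neg_nhdsGT_zero [IsFiniteMeasure μ] :
    Tendsto (fun h => μ (Ici (-h))) (𝓝[>] 0) (𝓝 (μ (Ici 0))) := by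
  have h := tendsto_measure_biInter_gt (μ := μ) (s := fun h => Ici (-h)) (a := 0)
    (fun _ _ => measurableSet_Ici.nullMeasurableSet)
    (fun _ _ _ hij => Ici_subset_Ici.2 (neg_le_neg hij)) ⟨1, one_pos, measure_ne_top μ _⟩
  have hinter : ⋂ r > (0 : ℝ), Ici (-r) = Ici 0 := by
    ext x
    simp only [mem_iInter, mem_Ici]
    exact ⟨fun hx => le_of_forall_pos_le_add fun ε hε => by linarith [hx ε hε],
      fun hx r hr => by linarith⟩
  rwa [hinter] at h

theorem one_sub_measure_Ici_le_measure_Iic [IsProbabilityMeasure μ] (s : ℝ) :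
    1 - μ (Ici s) ≤ μ (Iic s) := by
  rw [tsub_le_iff_right, ← measure_univ (μ := μ), ← Iic_union_Ici (a := s)]
  exact measure_union_le _ _

theorem measureReal_map_neg_Ici_zero [IsProbabilityMeasure μ] [NullSingletonClass μ] :
    (μ.map Neg.neg).real (Ici 0) = 1 - μ.real (Ici 0) := by
  rw [map_measureReal_apply measurable_neg measurableSet_Ici, ← probReal_compl_eq_one_sub
    measurableSet_Ici, compl_Ici, measureReal_congr Iio_ae_eq_Iic]
  simp

theorem lintegral_ofReal_eq_lintegral_measure_Ici (μ : Measure ℝ) :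
    ∫⁻ x, ENNReal.ofReal x ∂μ = ∫⁻ t in Ioi 0, μ (Ici t) := by
  have := lintegral_eq_lintegral_meas_le μ (ae_of_all _ fun x => le_max_right x 0)
    (measurable_id.max measurable_const).aemeasurable
  simp only [ENNReal.ofReal_max, ENNReal.ofReal_zero, max_zero] at this ⊢
  rw [this]
  refine setLIntegral_congr_fun measurableSet_Ioi fun t ht => ?_
  congr 1
  ext x
  simp [not_le.2 (show (0 : ℝ) < t from ht)]

theorem lintegral_map_neg_ofReal (μ : Measure ℝ) :
    ∫⁻ x, ENNReal.ofReal x ∂(μ.map Neg.neg) = ∫⁻ x, ENNReal.ofReal (-x) ∂μ :=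
  lintegral_map ENNReal.measurable_ofReal measurable_neg

theorem lintegral_ofReal_ne_top_of_antitoneShiftRatio [IsProbabilityMeasure μ]
    (hS : AntitoneShiftRatio fun t => μ.real (Ici t)) : ∫⁻ x, ENNReal.ofReal x ∂μ ≠ ∞ := by
  obtain ⟨C, c, hc, hbound⟩ := hS.exists_le_mul_exp
    (fun s t hst => measureReal_mono (Ici_subset_Ici.2 hst)) (fun t => measureReal_le_one)
    ((ENNReal.tendsto_toReal ENNReal.zero_ne_top).comp (tendsto_measure_Ici_atTop μ))
  rw [lintegral_ofReal_eq_lintegral_measure_Ici]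
  refine ne_top_of_le_ne_top
    (IntegrableOn.setLIntegral_lt_top ((integrableOn_exp_mul_Ioi hc 0).const_mul C)).ne
    (setLIntegral_mono' measurableSet_Ioi fun t _ => ?_)
  rw [← ofReal_measureReal]
  exact ENNReal.ofReal_le_ofReal (hbound t)

theorem integrable_id_of_lintegral_ofReal_ne_top
    (hpos : ∫⁻ x, ENNReal.ofReal x ∂μ ≠ ∞) (hneg : ∫⁻ x, ENNReal.ofReal (-x) ∂μ ≠ ∞) :
    Integrable id μ := by
  refine ⟨aestronglyMeasurable_id, ?_⟩
  have habs : ∀ x : ℝ, ‖x‖ₑ = ENNReal.ofReal x + ENNReal.ofReal (-x) := fun x => by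
    rw [Real.enorm_eq_ofReal_abs]
    rcases le_total 0 x with hx | hx
    · simp [abs_of_nonneg hx, ENNReal.ofReal_of_nonpos (neg_nonpos.2 hx)]
    · simp [abs_of_nonpos hx, ENNReal.ofReal_of_nonpos hx]
  simp only [HasFiniteIntegral, id, habs]
  rw [lintegral_add_left ENNReal.measurable_ofReal]
  exact ENNReal.add_lt_top.2 ⟨hpos.lt_top, hneg.lt_top⟩

theorem integrable_id_of_antitoneShiftRatio [IsProbabilityMeasure μ]
    (hR : AntitoneShiftRatio fun t => μ.real (Ici t))
    (hL : AntitoneShiftRatio fun t => (μ.map Neg.neg).real (Ici t)) : Integrable id μ :=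
  integrable_id_of_lintegral_ofReal_ne_top (lintegral_ofReal_ne_top_of_antitoneShiftRatio hR)
    (lintegral_map_neg_ofReal μ ▸ lintegral_ofReal_ne_top_of_antitoneShiftRatio hL)

theorem lintegral_measure_Ici_eq_lintegral_measure_Iic_neg (hint : Integrable id μ)
    (hmean : ∫ x, x ∂μ = 0) :
    ∫⁻ t in Ioi 0, μ (Ici t) = ∫⁻ t in Ioi 0, μ (Iic (-t)) := by
  have hint' : Integrable (fun x : ℝ => x) μ := hint
  have h := integral_eq_lintegral_pos_part_sub_lintegral_neg_part hint'
  rw [hmean] at h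
  have heq : ∫⁻ x, ENNReal.ofReal x ∂μ = ∫⁻ x, ENNReal.ofReal (-x) ∂μ :=
    (ENNReal.toReal_eq_toReal_iff' hint'.lintegral_lt_top.ne
      hint.neg.lintegral_lt_top.ne).1 (sub_eq_zero.1 h.symm)
  rw [← lintegral_ofReal_eq_lintegral_measure_Ici, heq, ← lintegral_map_neg_ofReal,
    lintegral_ofReal_eq_lintegral_measure_Ici]
  congr with t
  rw [Measure.map_apply measurable_neg measurableSet_Ici]
  simp

theorem integrable_id_map_neg (hint : Integrable id μ) : Integrable id (μ.map Neg.neg) :=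
  (integrable_map_measure aestronglyMeasurable_id measurable_neg.aemeasurable).2 hint.neg

theorem integral_id_map_neg (μ : Measure ℝ) : ∫ x, x ∂(μ.map Neg.neg) = -∫ x, x ∂μ := by
  rw [integral_map (f := fun x => x) measurable_neg.aemeasurable aestronglyMeasurable_id,
    integral_neg]

theorem measureReal_Ici_zero_pos [IsProbabilityMeasure μ] (hint : Integrable id μ)
    (hmean : ∫ x, x ∂μ = 0) : 0 < μ.real (Ici 0) := by
  refine ENNReal.toReal_pos (fun h0 => ?_) (measure_ne_top μ _)
  have hneg : ∀ᵐ x ∂μ, 0 ≤ -x :=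
    (measure_eq_zero_iff_ae_notMem.1 h0).mono fun x hx => by
      simp only [mem_Ici, not_le] at hx; linarith
  have hsupp : 0 < μ (Function.support fun x : ℝ => -x) := by
    calc (0 : ℝ≥0∞) < μ (Ici 0)ᶜ := by rw [prob_compl_eq_one_sub measurableSet_Ici, h0]; simp
      _ ≤ μ (Function.support fun x : ℝ => -x) :=
        measure_mono fun x hx => by
          simp only [compl_Ici, mem_Iio, Function.mem_support, ne_eq, neg_eq_zero] at hx ⊢
          exact hx.ne
  have := (integral_pos_iff_support_of_nonneg_ae hneg hint.neg).2 hsupp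
  rw [integral_neg] at this
  simp [hmean] at this

end Measure

section Bound

variable {μ : Measure ℝ} [IsProbabilityMeasure μ]

/-- Mean zero balances `∫₀^∞ P(X ≥ t) dt ≤ K / |c|` against
`∫₀^∞ P(X ≤ -t) dt ≥ (K - 1 - log K) / |c|`. -/
theorem neg_one_le_log_of_measureReal_Ici_le (hint : Integrable id μ) (hmean : ∫ x, x ∂μ = 0)
    {K c : ℝ} (hK0 : 0 < K) (hK1 : K ≤ 1) (hc : c < 0)
    (hbound : ∀ t, μ.real (Ici t) ≤ K * exp (c * t)) : -1 ≤ log K := by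
  have hmajor : ∀ t, μ (Ici t) ≤ ENNReal.ofReal (K * exp (c * t)) := fun t => by
    rw [← ofReal_measureReal]; exact ENNReal.ofReal_le_ofReal (hbound t)
  set T := log K / c
  have hT : 0 ≤ T := div_nonneg_of_nonpos (log_nonpos hK0.le hK1) hc.le
  have hKT : K * exp (-(c * T)) = 1 := by
    rw [mul_div_cancel₀ _ hc.ne, exp_neg, exp_log hK0, mul_inv_cancel₀ hK0.ne']
  have hupper : ∫⁻ t in Ioi 0, μ (Ici t) ≤ ENNReal.ofReal (-K / c) :=
    lintegral_Ioi_ofReal_mul_exp hK0.le hc ▸ lintegral_mono hmajor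
  have hlower : ENNReal.ofReal ((log K + 1 - K) / c) ≤ ∫⁻ t in Ioi 0, μ (Iic (-t)) := by
    have hnonneg : ∀ t ∈ Ioc 0 T, 0 ≤ 1 - K * exp (-(c * t)) := fun t ht => by
      rw [sub_nonneg, ← hKT]
      exact mul_le_mul_of_nonneg_left (exp_le_exp.2 (by nlinarith [ht.2])) hK0.le
    calc ENNReal.ofReal ((log K + 1 - K) / c)
        = ENNReal.ofReal (∫ t in 0..T, (1 - K * exp (-(c * t)))) := by
          rw [integral_one_sub_mul_exp hc.ne, mul_sub, hKT]
          congr 1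
          field_simp
          ring
      _ = ∫⁻ t in Ioc 0 T, ENNReal.ofReal (1 - K * exp (-(c * t))) := by
          rw [intervalIntegral.integral_of_le hT, ofReal_integral_eq_lintegral_ofReal]
          · exact (continuous_const.sub (continuous_const.mul
              (continuous_exp.comp (continuous_const.mul continuous_id).neg))).integrableOn_Ioc
          · exact (ae_restrict_iff' measurableSet_Ioc).2 (ae_of_all _ hnonneg)
      _ ≤ ∫⁻ t in Ioc 0 T, μ (Iic (-t)) := by
          refine lintegral_mono fun t => ?_
          have h := hmajor (-t)
          rw [mul_neg] at h
          rw [ENNReal.ofReal_sub _ (by positivity), ENNReal.ofReal_one]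
          exact (tsub_le_tsub_left h 1).trans (one_sub_measure_Ici_le_measure_Iic _)
      _ ≤ ∫⁻ t in Ioi 0, μ (Iic (-t)) := lintegral_mono_set Ioc_subset_Ioi_self
  have key := hlower.trans
    ((lintegral_measure_Ici_eq_lintegral_measure_Iic_neg hint hmean).symm.le.trans hupper)
  rw [ENNReal.ofReal_le_ofReal_iff (div_nonneg_of_nonpos (by linarith) hc.le),
    div_le_div_right_of_neg hc] at key
  linarith

theorem one_div_exp_le_of_measureReal_Ici_le (hint : Integrable id μ) (hmean : ∫ x, x ∂μ = 0)
    {K c : ℝ} (hc : c ≤ 0) (hbound : ∀ t, μ.real (Ici t) ≤ K * exp (c * t)) :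
    1 / exp 1 ≤ K := by
  rcases le_or_gt 1 K with hK1 | hK1
  · exact ((div_le_one (exp_pos 1)).2 (one_le_exp zero_le_one)).trans hK1
  rcases hc.lt_or_eq with hc | rfl
  · have hK0 : 0 < K := (measureReal_Ici_zero_pos hint hmean).trans_le (by simpa using hbound 0)
    rw [one_div, ← exp_neg, ← le_log_iff_exp_le hK0]
    exact neg_one_le_log_of_measureReal_Ici_le hint hmean hK0 hK1.le hc hbound
  · have hlim := (ENNReal.tendsto_toReal (measure_ne_top μ univ)).comp (tendsto_measure_Ici_atBot μ)
    have hbound0 : ∀ t, μ.real (Ici t) ≤ K := by simpa using hbound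
    have := le_of_tendsto' hlim hbound0
    simp only [measure_univ, ENNReal.toReal_one] at this
    linarith

theorem one_div_exp_le_measureReal_Ici_zero (hS : AntitoneShiftRatio fun t => μ.real (Ici t))
    (hint : Integrable id μ) (hmean : ∫ x, x ∂μ = 0) : 1 / exp 1 ≤ μ.real (Ici 0) := by
  have hanti : Antitone fun t => μ.real (Ici t) := fun s t hst =>
    measureReal_mono (Ici_subset_Ici.2 hst)
  have hp := measureReal_Ici_zero_pos hint hmean
  -- the chord of `log S` through `-h` and `0` gives the majorant `S t ≤ S (-h) e^{c t}`
  have hleft : ∀ h > 0, 1 / exp 1 ≤ μ.real (Ici (-h)) := by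
    intro h hh
    have hbound := hS.le_mul_exp hanti (neg_lt_zero.2 hh) hp
    simp only [sub_neg_eq_add, zero_add, sub_zero] at hbound
    refine one_div_exp_le_of_measureReal_Ici_le hint hmean ?_ hbound
    have hpos : 0 < μ.real (Ici (-h)) := hp.trans_le (hanti (by linarith))
    exact div_nonpos_of_nonpos_of_nonneg
      (log_nonpos (by positivity) ((div_le_one hpos).2 (hanti (by linarith)))) hh.le
  exact ge_of_tendsto ((ENNReal.tendsto_toReal (measure_ne_top μ _)).comp
    tendsto_measure_Ici_neg_nhdsGT_zero) (eventually_nhdsWithin_of_forall hleft)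

theorem measureReal_Ici_zero_mem_Icc [NullSingletonClass μ]
    (hR : AntitoneShiftRatio fun t => μ.real (Ici t))
    (hL : AntitoneShiftRatio fun t => (μ.map Neg.neg).real (Ici t)) (hmean : ∫ x, x ∂μ = 0) :
    μ.real (Ici 0) ∈ Icc (1 / exp 1) (1 - 1 / exp 1) := by
  have hint := integrable_id_of_antitoneShiftRatio hR hL
  have hup := one_div_exp_le_measureReal_Ici_zero hL (integrable_id_map_neg hint)
    (by rw [integral_id_map_neg, hmean, neg_zero])
  rw [measureReal_map_neg_Ici_zero] at hup
  exact ⟨one_div_exp_le_measureReal_Ici_zero hR hint hmean, by linarith⟩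

end Bound

end Grunbaum

/-- Grünbaum's lemma: a real random variable with log-concave density and
barycenter at the origin satisfies `1/e ≤ P(X₁ ≥ 0) ≤ 1 - 1/e`. -/
theorem grunbaum_lemma
    {Ω : Type*} [MeasurableSpace Ω] (ℙ : Measure Ω) [IsProbabilityMeasure ℙ]
    (X₁ : Ω → ℝ) (hX : Measurable X₁)
    (g : ℝ → ℝ) (hg0 : ∀ x, 0 ≤ g x)
    (hlc : ∀ x y a b : ℝ, 0 ≤ a → 0 ≤ b → a + b = 1 →
      g x ^ a * g y ^ b ≤ g (a * x + b * y))
    (hdens : Measure.map X₁ ℙ = volume.withDensity (fun x => ENNReal.ofReal (g x)))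
    (hmean : ∫ ω, X₁ ω ∂ℙ = 0) :
    1 / Real.exp 1 ≤ (ℙ {ω | 0 ≤ X₁ ω}).toReal ∧
      (ℙ {ω | 0 ≤ X₁ ω}).toReal ≤ 1 - 1 / Real.exp 1 := by
  set μ := ℙ.map X₁
  have : IsProbabilityMeasure μ := Measure.isProbabilityMeasure_map hX.aemeasurable
  have : NullSingletonClass μ := hdens ▸ inferInstance
  have hg := Grunbaum.antitoneShiftRatio_of_logConcave hg0 hlc
  have hν : μ.map Neg.neg = volume.withDensity fun x => ENNReal.ofReal (g (-x)) := by
    rw [hdens, Grunbaum.map_neg_withDensity]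
  have hP : (ℙ {ω | 0 ≤ X₁ ω}).toReal = μ.real (Ici 0) := by
    rw [map_measureReal_apply hX measurableSet_Ici]; rfl
  have hR := Grunbaum.antitoneShiftRatio_measureReal_Ici hg0 hg hdens
  have hL := Grunbaum.antitoneShiftRatio_measureReal_Ici (fun x => hg0 (-x)) hg.comp_neg hν
  rw [hP]
  exact Grunbaum.measureReal_Ici_zero_mem_Icc hR hL
    ((integral_map hX.aemeasurable aestronglyMeasurable_id).trans hmean)
end

section
/- Let X and X' be i.i.d. random vectors in ℝⁿ and let U be an orthogonal map on ℝⁿ. Then for every t ≥ 0, P(|X| ≥ t)² ≤ 2 · max( P(|(X + U X')/√2| ≥ t), P(|(X − U X')/√2| ≥ t) ). -/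
open MeasureTheory Real

/-- For i.i.d. random vectors `X, X'` in `ℝⁿ`, an orthogonal map `U` and `t ≥ 0`:
`P(|X| ≥ t)² ≤ 2 max(P(|(X+UX')/√2| ≥ t), P(|(X−UX')/√2| ≥ t))`. -/
theorem deviation_transfer_above
    {n : ℕ} {Ω : Type*} [MeasurableSpace Ω] (ℙ : Measure Ω) [IsProbabilityMeasure ℙ]
    (X X' : Ω → EuclideanSpace ℝ (Fin n)) (hX : Measurable X) (hX' : Measurable X')
    (hindep : ProbabilityTheory.IndepFun X X' ℙ)
    (hid : Measure.map X ℙ = Measure.map X' ℙ)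
    (U : EuclideanSpace ℝ (Fin n) ≃ₗᵢ[ℝ] EuclideanSpace ℝ (Fin n))
    (t : ℝ) (ht : 0 ≤ t) :
    (ℙ {ω | t ≤ ‖X ω‖}).toReal ^ 2 ≤
      2 * max (ℙ {ω | t ≤ ‖(Real.sqrt 2)⁻¹ • (X ω + U (X' ω))‖}).toReal
              (ℙ {ω | t ≤ ‖(Real.sqrt 2)⁻¹ • (X ω - U (X' ω))‖}).toReal := by
  set s : Set (EuclideanSpace ℝ (Fin n)) := {x | t ≤ ‖x‖} with hs
  have hms : MeasurableSet s := measurableSet_le measurable_const measurable_norm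
  set B : Set Ω := {ω | t ≤ ‖(Real.sqrt 2)⁻¹ • (X ω + U (X' ω))‖} with hB
  set C : Set Ω := {ω | t ≤ ‖(Real.sqrt 2)⁻¹ • (X ω - U (X' ω))‖} with hC
  have hAeq : {ω | t ≤ ‖X ω‖} = X ⁻¹' s := rfl
  have h2 : ℙ (X ⁻¹' s) = ℙ (X' ⁻¹' s) := by
    rw [← Measure.map_apply hX hms, ← Measure.map_apply hX' hms, hid]
  have hmul : ℙ (X ⁻¹' s ∩ X' ⁻¹' s) = ℙ (X ⁻¹' s) * ℙ (X' ⁻¹' s) :=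
    hindep.measure_inter_preimage_eq_mul s s hms hms
  have hsqrt2 : (0:ℝ) < Real.sqrt 2 := Real.sqrt_pos.mpr (by norm_num)
  have hsq : Real.sqrt 2 * Real.sqrt 2 = 2 := Real.mul_self_sqrt (by norm_num)
  have hsub : X ⁻¹' s ∩ X' ⁻¹' s ⊆ B ∪ C := by
    rintro ω ⟨h1, h2'⟩
    by_contra hcon
    simp only [hB, hC, Set.mem_union, Set.mem_setOf_eq, not_or, not_le] at hcon
    obtain ⟨hb, hc⟩ := hcon
    set a := X ω
    set b := U (X' ω)
    have hna : t ≤ ‖a‖ := h1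
    have hnb : t ≤ ‖b‖ := by
      have := U.norm_map (X' ω)
      rw [this]; exact h2'
    have hsmul : ∀ v : EuclideanSpace ℝ (Fin n),
        ‖(Real.sqrt 2)⁻¹ • v‖ = (Real.sqrt 2)⁻¹ * ‖v‖ := by
      intro v
      rw [norm_smul, Real.norm_eq_abs, abs_of_nonneg (by positivity)]
    rw [hsmul] at hb hc
    have hb' : ‖a + b‖ < Real.sqrt 2 * t := by
      have := (inv_mul_lt_iff₀ hsqrt2).mp hb
      linarith
    have hc' : ‖a - b‖ < Real.sqrt 2 * t := by
      have := (inv_mul_lt_iff₀ hsqrt2).mp hc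
      linarith
    have hpar := parallelogram_law_with_norm ℝ a b
    have e1 : ‖a + b‖ * ‖a + b‖ < 2 * (t * t) := by
      have := mul_lt_mul'' hb' hb' (norm_nonneg _) (norm_nonneg _)
      nlinarith
    have e2 : ‖a - b‖ * ‖a - b‖ < 2 * (t * t) := by
      have := mul_lt_mul'' hc' hc' (norm_nonneg _) (norm_nonneg _)
      nlinarith
    have e3 : t * t ≤ ‖a‖ * ‖a‖ := mul_le_mul hna hna ht (norm_nonneg a)
    have e4 : t * t ≤ ‖b‖ * ‖b‖ := mul_le_mul hnb hnb ht (norm_nonneg b)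
    linarith
  have hmono : ℙ (X ⁻¹' s ∩ X' ⁻¹' s) ≤ ℙ B + ℙ C :=
    le_trans (measure_mono hsub) (measure_union_le B C)
  have hfin : ∀ S : Set Ω, ℙ S ≠ ⊤ := fun S => measure_ne_top ℙ S
  have key : (ℙ (X ⁻¹' s)).toReal ^ 2 ≤ (ℙ B).toReal + (ℙ C).toReal := by
    have := ENNReal.toReal_mono (by simp [hfin]) hmono
    rw [hmul, ← h2, ENNReal.toReal_mul, ENNReal.toReal_add (hfin B) (hfin C)] at this
    calc (ℙ (X ⁻¹' s)).toReal ^ 2 = (ℙ (X ⁻¹' s)).toReal * (ℙ (X ⁻¹' s)).toReal := sq _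
    _ ≤ (ℙ B).toReal + (ℙ C).toReal := this
  rw [hAeq]
  have h1 := le_max_left (ℙ B).toReal (ℙ C).toReal
  have h2' := le_max_right (ℙ B).toReal (ℙ C).toReal
  linarith
end

section
/- Let X and X' be i.i.d. random vectors in ℝⁿ and let U be an orthogonal map on ℝⁿ. Then for every t ≥ 0, P(|X| ≤ t)² ≤ 2 · max( P(|(X + U X')/√2| ≤ t), P(|(X − U X')/√2| ≤ t) ). -/
/-!
On the event that `|X| ≤ t` and `|X'| ≤ t`, also `|U X'| ≤ t`, and the parallelogram law
`|X + U X'|² + |X - U X'|² = 2(|X|² + |U X'|²) ≤ 4t²` forces one of `|(X ± U X')/√2|` to be at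
most `t`. By independence and equal distribution that event has probability `P(|X| ≤ t)²`, and
a union bound finishes.
-/

open MeasureTheory Real

lemma norm_add_le_or_norm_sub_le_of_norm_le {E : Type*} [NormedAddCommGroup E] [InnerProductSpace ℝ E]
    {a b : E} {t : ℝ} (ha : ‖a‖ ≤ t) (hb : ‖b‖ ≤ t) :
    ‖(√2)⁻¹ • (a + b)‖ ≤ t ∨ ‖(√2)⁻¹ • (a - b)‖ ≤ t := by
  have ht : 0 ≤ t := (norm_nonneg a).trans ha
  have hscaled (c : E) (hc : ‖c‖ ^ 2 ≤ 2 * t ^ 2) : ‖(√2)⁻¹ • c‖ ≤ t := by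
    rw [norm_smul, norm_inv, norm_of_nonneg (sqrt_nonneg 2), inv_mul_le_iff₀ (by positivity),
      ← sqrt_sq ht, ← sqrt_mul zero_le_two, ← sqrt_sq (norm_nonneg c)]
    exact sqrt_le_sqrt hc
  have hpar := parallelogram_law_with_norm ℝ a b
  have ha2 : ‖a‖ ^ 2 ≤ t ^ 2 := pow_le_pow_left₀ (norm_nonneg a) ha 2
  have hb2 : ‖b‖ ^ 2 ≤ t ^ 2 := pow_le_pow_left₀ (norm_nonneg b) hb 2
  rcases le_total (‖a + b‖ ^ 2) (‖a - b‖ ^ 2) with h | h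
  · exact Or.inl (hscaled _ (by linarith))
  · exact Or.inr (hscaled _ (by linarith))

lemma measure_preimage_sq_eq_measure_inter {Ω α : Type*} [MeasurableSpace Ω] [MeasurableSpace α]
    {μ : Measure Ω} {X X' : Ω → α} (hX : Measurable X) (hX' : Measurable X')
    (hindep : ProbabilityTheory.IndepFun X X' μ) (hid : μ.map X = μ.map X')
    {s : Set α} (hs : MeasurableSet s) :
    μ (X ⁻¹' s) ^ 2 = μ (X ⁻¹' s ∩ X' ⁻¹' s) := by
  have hsame : μ (X ⁻¹' s) = μ (X' ⁻¹' s) := by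
    rw [← Measure.map_apply hX hs, ← Measure.map_apply hX' hs, hid]
  rw [hindep.measure_inter_preimage_eq_mul s s hs hs, ← hsame, sq]

lemma ENNReal.toReal_sq_le_two_mul_max_of_sq_le_add {a b c : ENNReal} (hb : b ≠ ⊤) (hc : c ≠ ⊤)
    (h : a ^ 2 ≤ b + c) : a.toReal ^ 2 ≤ 2 * max b.toReal c.toReal := by
  have hreal : a.toReal ^ 2 ≤ b.toReal + c.toReal := by
    rw [← ENNReal.toReal_pow, ← ENNReal.toReal_add hb hc]
    exact ENNReal.toReal_mono (ENNReal.add_ne_top.2 ⟨hb, hc⟩) h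
  linarith [le_max_left b.toReal c.toReal, le_max_right b.toReal c.toReal]

theorem deviation_transfer_below_general
    {n : ℕ} {Ω : Type*} [MeasurableSpace Ω] (ℙ : Measure Ω) [IsProbabilityMeasure ℙ]
    (X X' : Ω → EuclideanSpace ℝ (Fin n)) (hX : Measurable X) (hX' : Measurable X')
    (hindep : ProbabilityTheory.IndepFun X X' ℙ)
    (hid : Measure.map X ℙ = Measure.map X' ℙ)
    (U : EuclideanSpace ℝ (Fin n) ≃ₗᵢ[ℝ] EuclideanSpace ℝ (Fin n))
    (t : ℝ) :
    (ℙ {ω | ‖X ω‖ ≤ t}).toReal ^ 2 ≤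
      2 * max (ℙ {ω | ‖(Real.sqrt 2)⁻¹ • (X ω + U (X' ω))‖ ≤ t}).toReal
              (ℙ {ω | ‖(Real.sqrt 2)⁻¹ • (X ω - U (X' ω))‖ ≤ t}).toReal := by
  let ball : Set (EuclideanSpace ℝ (Fin n)) := {x | ‖x‖ ≤ t}
  have hball : MeasurableSet ball := measurableSet_le measurable_norm measurable_const
  have hsub : X ⁻¹' ball ∩ X' ⁻¹' ball ⊆
      {ω | ‖(√2)⁻¹ • (X ω + U (X' ω))‖ ≤ t} ∪ {ω | ‖(√2)⁻¹ • (X ω - U (X' ω))‖ ≤ t} :=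
    fun ω ⟨hXω, hX'ω⟩ =>
      norm_add_le_or_norm_sub_le_of_norm_le hXω ((U.norm_map (X' ω)).trans_le hX'ω)
  refine ENNReal.toReal_sq_le_two_mul_max_of_sq_le_add (measure_ne_top _ _) (measure_ne_top _ _) ?_
  calc ℙ (X ⁻¹' ball) ^ 2 = ℙ (X ⁻¹' ball ∩ X' ⁻¹' ball) :=
        measure_preimage_sq_eq_measure_inter hX hX' hindep hid hball
    _ ≤ _ := (measure_mono hsub).trans (measure_union_le _ _)

/-- For i.i.d. random vectors `X, X'` in `ℝⁿ`, an orthogonal map `U` and `t ≥ 0`: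
`P(|X| ≤ t)² ≤ 2 max(P(|(X+UX')/√2| ≤ t), P(|(X−UX')/√2| ≤ t))`. -/
theorem deviation_transfer_below
    {n : ℕ} {Ω : Type*} [MeasurableSpace Ω] (ℙ : Measure Ω) [IsProbabilityMeasure ℙ]
    (X X' : Ω → EuclideanSpace ℝ (Fin n)) (hX : Measurable X) (hX' : Measurable X')
    (hindep : ProbabilityTheory.IndepFun X X' ℙ)
    (hid : Measure.map X ℙ = Measure.map X' ℙ)
    (U : EuclideanSpace ℝ (Fin n) ≃ₗᵢ[ℝ] EuclideanSpace ℝ (Fin n))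
    (t : ℝ) (ht : 0 ≤ t) :
    (ℙ {ω | ‖X ω‖ ≤ t}).toReal ^ 2 ≤
      2 * max (ℙ {ω | ‖(Real.sqrt 2)⁻¹ • (X ω + U (X' ω))‖ ≤ t}).toReal
              (ℙ {ω | ‖(Real.sqrt 2)⁻¹ • (X ω - U (X' ω))‖ ≤ t}).toReal :=
  deviation_transfer_below_general ℙ X X' hX hX' hindep hid U t
end

section
/- For i.i.d. random vectors X, X' in ℝⁿ, an orthogonal map U, and t ≥ 0: P(|(X + UX')/√2| ≤ t) + P(|(X − UX')/√2| ≤ t) ≥ P(|X| ≤ t)². -/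
open MeasureTheory Real

/-- For i.i.d. random vectors `X, X'` in `ℝⁿ`, an orthogonal map `U` and `t ≥ 0`:
`P(|(X+UX')/√2| ≤ t) + P(|(X−UX')/√2| ≤ t) ≥ P(|X| ≤ t)²`. -/
theorem sum_small_ball_ge_sq
    {n : ℕ} {Ω : Type*} [MeasurableSpace Ω] (ℙ : Measure Ω) [IsProbabilityMeasure ℙ]
    (X X' : Ω → EuclideanSpace ℝ (Fin n)) (hX : Measurable X) (hX' : Measurable X')
    (hindep : ProbabilityTheory.IndepFun X X' ℙ)
    (hid : Measure.map X ℙ = Measure.map X' ℙ)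
    (U : EuclideanSpace ℝ (Fin n) ≃ₗᵢ[ℝ] EuclideanSpace ℝ (Fin n))
    (t : ℝ) (ht : 0 ≤ t) :
    (ℙ {ω | ‖X ω‖ ≤ t}).toReal ^ 2 ≤
      (ℙ {ω | ‖(Real.sqrt 2)⁻¹ • (X ω + U (X' ω))‖ ≤ t}).toReal +
      (ℙ {ω | ‖(Real.sqrt 2)⁻¹ • (X ω - U (X' ω))‖ ≤ t}).toReal := by
  set S : Set (EuclideanSpace ℝ (Fin n)) := Metric.closedBall 0 t with hSdef
  have hSm : MeasurableSet S := measurableSet_closedBall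
  have hmemS : ∀ v : EuclideanSpace ℝ (Fin n), v ∈ S ↔ ‖v‖ ≤ t := by
    intro v; simp [hSdef, mem_closedBall_zero_iff]
  set Bp := {ω | ‖(Real.sqrt 2)⁻¹ • (X ω + U (X' ω))‖ ≤ t} with hBp
  set Bm := {ω | ‖(Real.sqrt 2)⁻¹ • (X ω - U (X' ω))‖ ≤ t} with hBm
  have hsqrt2 : (0:ℝ) < Real.sqrt 2 := Real.sqrt_pos.mpr (by norm_num)
  have hsq2 : Real.sqrt 2 ^ 2 = 2 := Real.sq_sqrt (by norm_num)
  -- inclusion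
  have hincl : X ⁻¹' S ∩ X' ⁻¹' S ⊆ Bp ∪ Bm := by
    intro ω hω
    obtain ⟨h1, h2⟩ := hω
    rw [Set.mem_preimage, hmemS] at h1 h2
    set x := X ω
    set y := U (X' ω)
    have hy : ‖y‖ ≤ t := by rw [U.norm_map]; exact h2
    have hpar : ‖x + y‖ ^ 2 + ‖x - y‖ ^ 2 = 2 * (‖x‖ ^ 2 + ‖y‖ ^ 2) := by
      have := parallelogram_law_with_norm ℝ x y
      nlinarith [this]
    have key : ∀ v : EuclideanSpace ℝ (Fin n), ‖v‖ ^ 2 ≤ 2 * t ^ 2 →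
        ‖(Real.sqrt 2)⁻¹ • v‖ ≤ t := by
      intro v hv
      rw [norm_smul]
      have h1 : ‖v‖ ≤ Real.sqrt 2 * t := by
        have h' := Real.sqrt_le_sqrt hv
        rw [Real.sqrt_sq (norm_nonneg v), Real.sqrt_mul (by norm_num : (0:ℝ) ≤ 2),
          Real.sqrt_sq ht] at h'
        exact h'
      have : ‖(Real.sqrt 2)⁻¹‖ = (Real.sqrt 2)⁻¹ := by
        rw [Real.norm_eq_abs, abs_of_pos (by positivity)]
      rw [this]
      calc (Real.sqrt 2)⁻¹ * ‖v‖ ≤ (Real.sqrt 2)⁻¹ * (Real.sqrt 2 * t) := by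
            exact mul_le_mul_of_nonneg_left h1 (by positivity)
        _ = t := by field_simp
    rcases le_or_gt (‖x + y‖ ^ 2) (2 * t ^ 2) with h | h
    · left; exact key _ h
    · right
      apply key
      show ‖x - y‖ ^ 2 ≤ 2 * t ^ 2
      nlinarith [norm_nonneg x, norm_nonneg y, ht, sq_nonneg (‖x‖ - t), sq_nonneg (‖y‖ - t)]
  -- independence product
  have hprod : ℙ (X ⁻¹' S ∩ X' ⁻¹' S) = ℙ (X ⁻¹' S) * ℙ (X' ⁻¹' S) :=
    hindep.measure_inter_preimage_eq_mul S S hSm hSm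
  have hsame : ℙ (X' ⁻¹' S) = ℙ (X ⁻¹' S) := by
    have h1 : ℙ (X' ⁻¹' S) = (Measure.map X' ℙ) S := (Measure.map_apply hX' hSm).symm
    have h2 : ℙ (X ⁻¹' S) = (Measure.map X ℙ) S := (Measure.map_apply hX hSm).symm
    rw [h1, h2, hid]
  have hXS : {ω | ‖X ω‖ ≤ t} = X ⁻¹' S := by
    ext ω; simp [hmemS]
  have hle : ℙ (X ⁻¹' S) * ℙ (X ⁻¹' S) ≤ ℙ Bp + ℙ Bm := by
    calc ℙ (X ⁻¹' S) * ℙ (X ⁻¹' S) = ℙ (X ⁻¹' S ∩ X' ⁻¹' S) := by rw [hprod, hsame]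
      _ ≤ ℙ (Bp ∪ Bm) := measure_mono hincl
      _ ≤ ℙ Bp + ℙ Bm := measure_union_le _ _
  have hfin : ℙ Bp + ℙ Bm ≠ ⊤ := by
    exact ENNReal.add_ne_top.mpr ⟨measure_ne_top _ _, measure_ne_top _ _⟩
  rw [hXS]
  have := ENNReal.toReal_le_toReal (by exact ENNReal.mul_ne_top (measure_ne_top _ _) (measure_ne_top _ _)) hfin |>.mpr hle
  rw [ENNReal.toReal_mul, ENNReal.toReal_add (measure_ne_top _ _) (measure_ne_top _ _)] at this
  nlinarith [this]
end
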